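/- Let $n, k \geq 1$, let $S$ be the $2n \times 2n$ cyclic shift matrix with entries $S_{i,j} = \delta_{i, j+1 \bmod 2n}$, and let $L = r_0 I + \sum_{j=1}^k r_j (S^j + S^{-j})$ where $r_0 = -2\sum_{j=1}^k r_j$ and $r_j = \frac{2(-1)^{j+1}(k!)^2}{j^2(k-j)!(k+j)!}$. Then the spectral norm satisfies $\|L\| \leq \frac{4\pi^2}{3}$. -/

import Mathlib

open Nat Finset Real Matrix
open scoped Matrix.Norms.L2Operator

lemma stmt5_fact_sq_le (k j : ℕ) (hj : j ≤ k) : k ! * k ! ≤ (k - j)! * (k + j)! := by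
  have h1 := Nat.choose_mul_factorial_mul_factorial (show k - j ≤ 2 * k by omega)
  have h2 := Nat.choose_mul_factorial_mul_factorial (show k ≤ 2 * k by omega)
  have h3 : (2 * k).choose (k - j) ≤ (2 * k).choose k := by
    simpa using Nat.choose_le_middle (k - j) (2 * k)
  have h4 : 2 * k - (k - j) = k + j := by omega
  have h5 : 2 * k - k = k := by omega
  rw [h4] at h1; rw [h5] at h2
  have hpos : 0 < (2 * k).choose k := Nat.choose_pos (by omega)
  have : (2 * k).choose k * (k ! * k !) ≤ (2 * k).choose k * ((k - j)! * (k + j)!) := by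
    calc (2 * k).choose k * (k ! * k !) = (2 * k)! := by rw [← h2]; ring
    _ = (2 * k).choose (k - j) * ((k - j)! * (k + j)!) := by rw [← h1]; ring
    _ ≤ _ := Nat.mul_le_mul_right _ h3
  exact Nat.le_of_mul_le_mul_left this hpos

lemma stmt5_sum_sq_le (k : ℕ) : ∑ j ∈ Finset.Icc 1 k, (1 : ℝ) / (j : ℝ) ^ 2 ≤ π ^ 2 / 6 :=
  sum_le_hasSum _ (fun i _ => by positivity) hasSum_zeta_two

theorem stmt_5 (n k : ℕ) (hn : 1 ≤ n) (hk : 1 ≤ k)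
    (S : Matrix (Fin (2 * n)) (Fin (2 * n)) ℝ)
    (hS : ∀ i j, S i j = if (i : ℕ) = ((j : ℕ) + 1) % (2 * n) then 1 else 0)
    (r : ℕ → ℝ)
    (hr : ∀ j ∈ Finset.Icc 1 k,
      r j = 2 * (-1 : ℝ) ^ (j + 1) * (k ! : ℝ) ^ 2 /
        ((j : ℝ) ^ 2 * ((k - j)! : ℝ) * ((k + j)! : ℝ)))
    (hr0 : r 0 = -2 * ∑ j ∈ Finset.Icc 1 k, r j)
    (L : Matrix (Fin (2 * n)) (Fin (2 * n)) ℝ)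
    (hL : L = r 0 • (1 : Matrix (Fin (2 * n)) (Fin (2 * n)) ℝ) +
      ∑ j ∈ Finset.Icc 1 k, r j • (S ^ j + (Sᵀ) ^ j)) :
    ‖L‖ ≤ 4 * π ^ 2 / 3 := by
  haveI : NeZero (2 * n) := ⟨by omega⟩
  haveI : Nonempty (Fin (2 * n)) := ⟨⟨0, by omega⟩⟩
  -- norms of the shift matrices
  have hS2 : ∀ i j : Fin (2 * n), S i j = if i = j + 1 then (1 : ℝ) else 0 := by
    intro i j
    rw [hS]
    congr 1
    simp only [eq_iff_iff]
    constructor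
    · intro h; exact Fin.ext (by simp [Fin.add_def, ← h])
    · intro h; subst h; simp [Fin.add_def]
  have hmul : Sᵀ * S = 1 := by
    ext i j
    simp only [Matrix.mul_apply, Matrix.transpose_apply, hS2, Matrix.one_apply,
      ite_mul, one_mul, zero_mul]
    rw [Finset.sum_ite_eq' Finset.univ (i + 1)]
    simp [add_left_inj]
  have h1 : ‖(1 : Matrix (Fin (2 * n)) (Fin (2 * n)) ℝ)‖ = 1 := norm_one
  have hconj : Sᴴ = Sᵀ := by ext i j; simp [Matrix.conjTranspose_apply]
  have hSnorm : ‖S‖ = 1 := by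
    have := Matrix.l2_opNorm_conjTranspose_mul_self S
    rw [hconj, hmul, h1] at this
    nlinarith [norm_nonneg S]
  have hSTnorm : ‖Sᵀ‖ = 1 := by
    rw [← hconj, Matrix.l2_opNorm_conjTranspose]; exact hSnorm
  -- bound each |r j|
  have hrabs : ∀ j ∈ Finset.Icc 1 k, |r j| ≤ 2 * (1 / (j : ℝ) ^ 2) := by
    intro j hj
    obtain ⟨hj1, hj2⟩ := Finset.mem_Icc.mp hj
    have hjpos : (0 : ℝ) < (j : ℝ) ^ 2 := by positivity
    have hA : (0 : ℝ) < ((k - j)! : ℝ) := by positivity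
    have hB : (0 : ℝ) < ((k + j)! : ℝ) := by positivity
    have hfac : ((k ! : ℝ)) ^ 2 ≤ ((k - j)! : ℝ) * ((k + j)! : ℝ) := by
      have := stmt5_fact_sq_le k j hj2
      calc ((k ! : ℝ)) ^ 2 = ((k ! * k ! : ℕ) : ℝ) := by push_cast; ring
        _ ≤ (((k - j)! * (k + j)! : ℕ) : ℝ) := by exact_mod_cast Nat.cast_le.mpr this
        _ = _ := by push_cast; ring
    rw [hr j hj, abs_div]
    have hnum : |2 * (-1 : ℝ) ^ (j + 1) * (k ! : ℝ) ^ 2| = 2 * (k ! : ℝ) ^ 2 := by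
      rw [abs_mul, abs_mul, abs_pow, abs_neg, abs_one, one_pow]
      simp [abs_of_nonneg, sq_nonneg]
    have hden : |(j : ℝ) ^ 2 * ((k - j)! : ℝ) * ((k + j)! : ℝ)|
        = (j : ℝ) ^ 2 * ((k - j)! : ℝ) * ((k + j)! : ℝ) := by
      apply abs_of_pos; positivity
    rw [hnum, hden, div_le_iff₀ (by positivity)]
    have h2 : 2 * (1 / (j : ℝ) ^ 2) * ((j : ℝ) ^ 2 * ((k - j)! : ℝ) * ((k + j)! : ℝ))
        = 2 * (((k - j)! : ℝ) * ((k + j)! : ℝ)) := by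
      field_simp
    rw [h2]
    nlinarith
  -- bound the norm
  have habs0 : |r 0| ≤ 2 * ∑ j ∈ Finset.Icc 1 k, |r j| := by
    rw [hr0, abs_mul, abs_neg]
    simp only [abs_two]
    have := Finset.abs_sum_le_sum_abs (fun j => r j) (Finset.Icc 1 k)
    nlinarith
  have hbound : ‖L‖ ≤ |r 0| + ∑ j ∈ Finset.Icc 1 k, |r j| * 2 := by
    rw [hL]
    refine le_trans (norm_add_le _ _) ?_
    gcongr ?_ + ?_
    · rw [norm_smul, h1, mul_one, Real.norm_eq_abs]
    · refine le_trans (norm_sum_le _ _) (Finset.sum_le_sum fun j hj => ?_)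
      obtain ⟨hj1, _⟩ := Finset.mem_Icc.mp hj
      rw [norm_smul, Real.norm_eq_abs]
      have hp1 : ‖S ^ j‖ ≤ 1 := by
        calc ‖S ^ j‖ ≤ ‖S‖ ^ j := norm_pow_le' S (by omega)
        _ = 1 := by rw [hSnorm, one_pow]
      have hp2 : ‖(Sᵀ) ^ j‖ ≤ 1 := by
        calc ‖(Sᵀ) ^ j‖ ≤ ‖Sᵀ‖ ^ j := norm_pow_le' _ (by omega)
        _ = 1 := by rw [hSTnorm, one_pow]
      have : ‖S ^ j + (Sᵀ) ^ j‖ ≤ 2 := le_trans (norm_add_le _ _) (by linarith)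
      exact mul_le_mul_of_nonneg_left this (abs_nonneg _)
  have hsum : ∑ j ∈ Finset.Icc 1 k, |r j| ≤ π ^ 2 / 3 := by
    calc ∑ j ∈ Finset.Icc 1 k, |r j| ≤ ∑ j ∈ Finset.Icc 1 k, 2 * (1 / (j : ℝ) ^ 2) :=
      Finset.sum_le_sum hrabs
    _ = 2 * ∑ j ∈ Finset.Icc 1 k, (1 : ℝ) / (j : ℝ) ^ 2 := by rw [Finset.mul_sum]
    _ ≤ 2 * (π ^ 2 / 6) := by linarith [stmt5_sum_sq_le k]
    _ = π ^ 2 / 3 := by ring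
  have : ∑ j ∈ Finset.Icc 1 k, |r j| * 2 = 2 * ∑ j ∈ Finset.Icc 1 k, |r j| := by
    rw [← Finset.sum_mul]; ring
  linarith [hbound, habs0, hsum]
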